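/- arXiv:1411.3285 — 2 statements merged into one kernel-verified Lean document; each statement's English description precedes it below -/
import Mathlib

section
/- For all z > 0 and β > 0, setting ν(w) = √(1 + w²) (so that ν⁻¹(w)² = w² − 1 for w ≥ 1) and a = 1/(βz), the general edge-stopping formula simplifies to the Perona–Malik diffusivity: (3/(β² z² ν(a)³)) · ∫₀¹ ξ² √( ν(a)²/ξ² − 1 − a² ) dξ = 1/(1 + β² z²). -/
/-!
With `c = ν(a)² = 1 + a²` the integrand is `ξ² √(c/ξ² - c) = √c · ξ √(1 - ξ²)`, and the
substitution `u = 1 - ξ²` gives `∫₀¹ ξ √(1 - ξ²) dξ = 1/3`. The integral is therefore `ν(a)/3`,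
and the prefactor leaves `1/(β²z² ν(a)²) = 1/(β²z² + 1)`.
-/

open MeasureTheory Real

theorem integral_mul_sqrt_one_sub_sq :
    ∫ ξ in (0:ℝ)..1, ξ * √(1 - ξ ^ 2) = 1 / 3 := by
  have hsubst := intervalIntegral.integral_deriv_smul_comp
      (f := fun ξ : ℝ => 1 - ξ ^ 2) (f' := fun ξ : ℝ => -2 * ξ) (g := Real.sqrt)
      (a := 0) (b := 1)
      (fun x _ => ((hasDerivAt_pow 2 x).const_sub 1).congr_deriv (by norm_num))
      (continuous_const.mul continuous_id).continuousOn Real.continuous_sqrt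
  have hsqrt : ∫ u in (0:ℝ)..1, √u = 2 / 3 := by
    simp only [Real.sqrt_eq_rpow]
    rw [integral_rpow (Or.inl (by norm_num))]
    norm_num
  simp only [Function.comp, smul_eq_mul] at hsubst
  norm_num at hsubst
  rw [intervalIntegral.integral_symm 0 1, hsqrt] at hsubst
  have hmul : ∫ ξ in (0:ℝ)..1, 2 * ξ * √(1 - ξ ^ 2)
      = 2 * ∫ ξ in (0:ℝ)..1, ξ * √(1 - ξ ^ 2) := by
    simp only [mul_assoc, intervalIntegral.integral_const_mul]
  linarith

theorem sq_mul_sqrt_div_sq_sub {c ξ : ℝ} (hc : 0 ≤ c) (hξ : 0 ≤ ξ) :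
    ξ ^ 2 * √(c / ξ ^ 2 - c) = √c * (ξ * √(1 - ξ ^ 2)) := by
  rcases hξ.eq_or_lt with rfl | hξ
  · simp
  have hsplit : c / ξ ^ 2 - c = c * ((1 - ξ ^ 2) / ξ ^ 2) := by
    field_simp
  rw [hsplit, Real.sqrt_mul hc, Real.sqrt_div' _ (sq_nonneg ξ), Real.sqrt_sq hξ.le]
  field_simp

theorem integral_sq_mul_sqrt_div_sq_sub {c : ℝ} (hc : 0 ≤ c) :
    ∫ ξ in (0:ℝ)..1, ξ ^ 2 * √(c / ξ ^ 2 - c) = √c / 3 := by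
  have hcongr : Set.EqOn (fun ξ : ℝ => ξ ^ 2 * √(c / ξ ^ 2 - c))
      (fun ξ => √c * (ξ * √(1 - ξ ^ 2))) (Set.uIcc 0 1) := by
    intro ξ hξ
    rw [Set.uIcc_of_le zero_le_one] at hξ
    exact sq_mul_sqrt_div_sq_sub hc hξ.1
  rw [intervalIntegral.integral_congr hcongr, intervalIntegral.integral_const_mul,
    integral_mul_sqrt_one_sub_sq]
  ring

/-- For the Euclidean amoeba metric ν(w) = √(1+w²), the general edge-stopping
integral formula evaluates to the Perona–Malik diffusivity 1/(1+β²z²). -/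
theorem euclidean_edge_stopping_is_perona_malik
    (z β : ℝ) (hz : 0 < z) (hβ : 0 < β) :
    let ν : ℝ → ℝ := fun w => Real.sqrt (1 + w ^ 2)
    let a : ℝ := 1 / (β * z)
    3 / (β ^ 2 * z ^ 2 * (ν a) ^ 3) *
        (∫ ξ in (0:ℝ)..1, ξ ^ 2 * Real.sqrt ((ν a) ^ 2 / ξ ^ 2 - 1 - a ^ 2))
      = 1 / (1 + β ^ 2 * z ^ 2) := by
  intro ν a
  have hν_sq : ν a ^ 2 = 1 + a ^ 2 := Real.sq_sqrt (by positivity)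
  have hν_pos : 0 < ν a := Real.sqrt_pos.2 (by positivity)
  have hintegral : ∫ ξ in (0:ℝ)..1, ξ ^ 2 * √(ν a ^ 2 / ξ ^ 2 - 1 - a ^ 2) = ν a / 3 := by
    simp only [sub_sub, ← hν_sq]
    rw [integral_sq_mul_sqrt_div_sq_sub (sq_nonneg _), Real.sqrt_sq hν_pos.le]
  have ha_sq : a ^ 2 * (β ^ 2 * z ^ 2) = 1 := by
    simp only [a]
    field_simp
  clear_value ν a
  rw [hintegral]
  field_simp
  linear_combination -(β ^ 2 * z ^ 2) * hν_sq - ha_sq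
end

section
/- Fix k > 0 and let g(z) = 1/(1 + z²). For ε > 0 define u_ε : ℝ² → ℝ by u_ε(x,y) = x + ε cos(kx), and for ε < 1/k let R_ε(x,y) = [ |∇u_ε| div( g(|∇u_ε|) ∇u_ε/|∇u_ε| ) ](x,y) be the self-snakes right-hand side (which here equals ∂_x u_ε(x) · ∂_x[ g(∂_x u_ε) ](x) since u_ε depends only on x and ∂_x u_ε > 0). Then, as ε → 0⁺, sup over (x,y) ∈ ℝ² of | R_ε(x,y) − (k² ε/2) cos(kx) | = O(ε²). (A gradient-aligned oscillation of frequency k on a unit slope is amplified by the self-snakes evolution with frequency response factor k²/2.) -/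
/-!
As `u_ε` depends only on `x`, with slope `a = 1 - εk sin(kx) > 0` for small `ε`, the normalized
gradient is the constant unit vector `e₀` and the self-snakes term collapses to `a · (g ∘ a)'`.
With `g'(a) = -2a/(1+a²)²` and `a' = -εk² cos(kx)` this is `2a²·εk² cos(kx)/(1+a²)²`, which differs
from `εk² cos(kx)/2` by `εk² cos(kx)·(a²-1)²/(2(1+a²)²)`; since `a² - 1 = O(ε)`, the difference
is `O(ε³)`.
-/

open MeasureTheory Filter Topology

noncomputable section

abbrev Plane := EuclideanSpace ℝ (Fin 2)

/-- divergence of a planar vector field -/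
def div2 (V : Plane → Plane) (x : Plane) : ℝ :=
  ∑ i : Fin 2, fderiv ℝ (fun y => V y i) x (EuclideanSpace.single i 1)

/-- the Perona–Malik edge-stopping function (β = 1) -/
def g (z : ℝ) : ℝ := 1 / (1 + z ^ 2)

/-- the perturbed slope u_ε(x,y) = x + ε cos(kx) -/
def uPert (k ε : ℝ) (p : Plane) : ℝ := p 0 + ε * Real.cos (k * p 0)

/-- the self-snakes right-hand side |∇u| div( g(|∇u|) ∇u/|∇u| ) -/
def selfSnakesRHS (u : Plane → ℝ) (p : Plane) : ℝ :=
  ‖gradient u p‖ *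
    div2 (fun y => (g ‖gradient u y‖ / ‖gradient u y‖) • gradient u y) p

open Real

lemma hasGradientAt_comp_coord_zero {φ : ℝ → ℝ} {φ' : ℝ} {p : Plane}
    (h : HasDerivAt φ φ' (p 0)) :
    HasGradientAt (fun q : Plane => φ (q 0)) (φ' • EuclideanSpace.single 0 1) p := by
  rw [hasGradientAt_iff_hasFDerivAt]
  refine (h.comp_hasFDerivAt p
    (EuclideanSpace.proj (0 : Fin 2) : Plane →L[ℝ] ℝ).hasFDerivAt).congr_fderiv ?_
  ext
  simp [EuclideanSpace.inner_single_left]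

lemma div2_smul_single_zero {h : ℝ → ℝ} {h' : ℝ} {p : Plane} (hh : HasDerivAt h h' (p 0)) :
    div2 (fun q => h (q 0) • EuclideanSpace.single 0 1) p = h' := by
  have h0 : HasFDerivAt (fun q : Plane => h (q 0))
      (h' • (EuclideanSpace.proj (0 : Fin 2) : Plane →L[ℝ] ℝ)) p :=
    hh.comp_hasFDerivAt p (EuclideanSpace.proj (0 : Fin 2) : Plane →L[ℝ] ℝ).hasFDerivAt
  simp [div2, Fin.sum_univ_two, h0.fderiv]

lemma selfSnakesRHS_comp_coord_zero {φ φ' : ℝ → ℝ} {G : ℝ} {p : Plane}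
    (hφ : ∀ t, HasDerivAt φ (φ' t) t) (hpos : ∀ t, 0 < φ' t)
    (hG : HasDerivAt (fun t => g (φ' t)) G (p 0)) :
    selfSnakesRHS (fun q => φ (q 0)) p = φ' (p 0) * G := by
  have hgrad (q : Plane) : gradient (fun q : Plane => φ (q 0)) q
      = φ' (q 0) • EuclideanSpace.single 0 1 :=
    (hasGradientAt_comp_coord_zero (hφ _)).gradient
  have hnorm (q : Plane) : ‖gradient (fun q : Plane => φ (q 0)) q‖ = φ' (q 0) := by
    simp [hgrad, norm_smul, (hpos _).le]
  have hfield : (fun q => (g ‖gradient (fun q : Plane => φ (q 0)) q‖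
        / ‖gradient (fun q : Plane => φ (q 0)) q‖) • gradient (fun q : Plane => φ (q 0)) q)
      = fun q => g (φ' (q 0)) • EuclideanSpace.single 0 1 := by
    funext q
    rw [hnorm, hgrad, smul_smul, div_mul_cancel₀ _ (hpos _).ne']
  rw [selfSnakesRHS, hfield, hnorm, div2_smul_single_zero hG]

lemma hasDerivAt_g (z : ℝ) : HasDerivAt g (-(2 * z) / (1 + z ^ 2) ^ 2) z := by
  have hg : g = fun x => (1 + x ^ 2)⁻¹ := funext fun x => one_div _
  rw [hg]
  exact (((hasDerivAt_pow 2 z).const_add 1).inv (by positivity)).congr_deriv (by norm_num)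

lemma abs_mul_pow_div_sub_half_le (a d : ℝ) :
    |a * (2 * a * d / (1 + a ^ 2) ^ 2) - d / 2| ≤ |d| * (a ^ 2 - 1) ^ 2 / 2 := by
  have hpos : 0 < 1 + a ^ 2 := by positivity
  have hid : a * (2 * a * d / (1 + a ^ 2) ^ 2) - d / 2
      = -(d * ((a ^ 2 - 1) ^ 2 / (1 + a ^ 2) ^ 2)) / 2 := by
    field_simp; ring
  have hratio : (a ^ 2 - 1) ^ 2 / (1 + a ^ 2) ^ 2 ≤ (a ^ 2 - 1) ^ 2 :=
    div_le_self (sq_nonneg _) (one_le_pow₀ (by nlinarith))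
  rw [hid, abs_div, abs_neg, abs_mul, abs_of_nonneg (by positivity : (0 : ℝ) ≤ _ / _)]
  gcongr
  norm_num

lemma abs_sq_sub_one_le {a e : ℝ} (ha : |a - 1| ≤ e) (he : e ≤ 1 / 2) :
    |a ^ 2 - 1| ≤ 5 / 2 * e := by
  have hplus : |a + 1| ≤ 5 / 2 := by
    calc |a + 1| = |(a - 1) + 2| := by ring_nf
      _ ≤ |a - 1| + 2 := by simpa using abs_add_le (a - 1) 2
      _ ≤ 5 / 2 := by linarith
  calc |a ^ 2 - 1| = |a - 1| * |a + 1| := by rw [← abs_mul]; ring_nf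
    _ ≤ e * (5 / 2) := mul_le_mul ha hplus (abs_nonneg _) ((abs_nonneg _).trans ha)
    _ = 5 / 2 * e := mul_comm _ _

section uPert

variable (k ε : ℝ)

lemma hasDerivAt_uPert_profile (t : ℝ) :
    HasDerivAt (fun s => s + ε * cos (k * s)) (1 - ε * k * sin (k * t)) t :=
  ((hasDerivAt_id t).add (((hasDerivAt_id t).const_mul k).cos.const_mul ε)).congr_deriv
    (by simp; ring)

lemma hasDerivAt_uPert_slope (t : ℝ) :
    HasDerivAt (fun s => 1 - ε * k * sin (k * s)) (-(ε * k ^ 2 * cos (k * t))) t :=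
  ((((hasDerivAt_id t).const_mul k).sin.const_mul (ε * k)).const_sub 1).congr_deriv
    (by simp; ring)

lemma selfSnakesRHS_uPert (hslope : ∀ t, 0 < 1 - ε * k * sin (k * t)) (p : Plane) :
    selfSnakesRHS (uPert k ε) p
      = (1 - ε * k * sin (k * p 0)) * (2 * (1 - ε * k * sin (k * p 0))
          * (ε * k ^ 2 * cos (k * p 0)) / (1 + (1 - ε * k * sin (k * p 0)) ^ 2) ^ 2) :=
  selfSnakesRHS_comp_coord_zero (φ := fun s => s + ε * cos (k * s))
    (φ' := fun t => 1 - ε * k * sin (k * t)) (hasDerivAt_uPert_profile k ε) hslope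
    (((hasDerivAt_g _).comp _ (hasDerivAt_uPert_slope k ε _)).congr_deriv (by ring))

end uPert

theorem self_snakes_gradient_aligned_frequency_response_general (k : ℝ) :
    ∃ C : ℝ, ∀ᶠ ε in 𝓝[>] (0:ℝ), ∀ p : Plane,
      |selfSnakesRHS (uPert k ε) p - k ^ 2 * ε / 2 * Real.cos (k * p 0)|
        ≤ C * ε ^ 2 := by
  refine ⟨2 * |k| ^ 3, ?_⟩
  have hsmall : ∀ᶠ ε in 𝓝[>] (0 : ℝ), ε * |k| < 1 / 2 :=
    nhdsWithin_le_nhds <| ((continuous_id.mul continuous_const).tendsto' 0 0 (by simp)).eventually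
      (gt_mem_nhds (by norm_num))
  filter_upwards [self_mem_nhdsWithin, hsmall] with ε (hε : 0 < ε) hεk p
  have hsin (t : ℝ) : |ε * k * sin (k * t)| ≤ ε * |k| := by
    rw [abs_mul, abs_mul, abs_of_pos hε]
    exact mul_le_of_le_one_right (by positivity) (abs_sin_le_one _)
  have hslope (t : ℝ) : 0 < 1 - ε * k * sin (k * t) := by
    linarith [(abs_le.mp (hsin t)).2]
  have hcos : |ε * k ^ 2 * cos (k * p 0)| ≤ ε * |k| ^ 2 := by
    rw [abs_mul, abs_mul, abs_of_pos hε, abs_pow]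
    exact mul_le_of_le_one_right (by positivity) (abs_cos_le_one _)
  have hsq : |(1 - ε * k * sin (k * p 0)) ^ 2 - 1| ≤ 5 / 2 * (ε * |k|) :=
    abs_sq_sub_one_le (by simpa using hsin (p 0)) hεk.le
  rw [selfSnakesRHS_uPert k ε hslope, show k ^ 2 * ε / 2 * cos (k * p 0)
    = ε * k ^ 2 * cos (k * p 0) / 2 by ring]
  calc _ ≤ |ε * k ^ 2 * cos (k * p 0)| * ((1 - ε * k * sin (k * p 0)) ^ 2 - 1) ^ 2 / 2 :=
        abs_mul_pow_div_sub_half_le _ _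
    _ ≤ ε * |k| ^ 2 * (5 / 2 * (ε * |k|)) ^ 2 / 2 := by
        rw [← sq_abs ((1 - ε * k * sin (k * p 0)) ^ 2 - 1)]
        gcongr
    _ = 25 / 8 * (ε * |k|) * (|k| ^ 3 * ε ^ 2) := by ring
    _ ≤ 2 * |k| ^ 3 * ε ^ 2 := by
        have : 0 ≤ |k| ^ 3 * ε ^ 2 := by positivity
        nlinarith [mul_le_mul_of_nonneg_right hεk.le this]

/-- A gradient-aligned oscillation of frequency k on a unit slope is amplified by
the self-snakes evolution with frequency response factor k²/2: the deviation of
the self-snakes right-hand side from (k²ε/2)cos(kx) is uniformly O(ε²) as ε → 0⁺. -/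
theorem self_snakes_gradient_aligned_frequency_response (k : ℝ) (hk : 0 < k) :
    ∃ C : ℝ, ∀ᶠ ε in 𝓝[>] (0:ℝ), ∀ p : Plane,
      |selfSnakesRHS (uPert k ε) p - k ^ 2 * ε / 2 * Real.cos (k * p 0)|
        ≤ C * ε ^ 2 :=
  self_snakes_gradient_aligned_frequency_response_general k
end
end
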